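/- Let N ≥ 1 and m ≥ 1, let M₀, M₁, …, M_m be N×N complex Hermitian matrices, let v ∈ ℂ^N be nonzero, let σ₁,…,σ_m > 0, let η₁,…,η_m ∈ ℝ, and set z_j := v* M_j v + η_j. Suppose there exist μ̂ ∈ ℝ^m and λ > 0 such that H := M₀ + Σ_{j=1}^m μ̂_j M_j is positive semidefinite, H v = 0, and x* H x ≥ λ ‖x‖² for every x ∈ ℂ^N with v* x = 0. Let ρ ≥ max_{1≤j≤m} σ_j |μ̂_j| with ρ > 0, and let X be a positive semidefinite Hermitian matrix minimizing g(Y) := Tr(M₀ Y) + ρ Σ_{j=1}^m σ_j^{-1} |Tr(M_j Y) − z_j| over all positive semidefinite Hermitian matrices Y. Then, with β := (v* X v)/‖v‖⁴ ≥ 0, the estimate ‖X − β v v*‖_F² ≤ (4ρ/λ) · (Σ_{j=1}^m σ_j^{-1}|η_j|) · Tr(X) holds. -/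

import Mathlib

open Matrix ComplexOrder

section Helpers
variable {n : Type*} [Fintype n] [DecidableEq n]

omit [DecidableEq n] in
lemma trace_mul_vecMulVec (A : Matrix n n ℂ) (v : n → ℂ) :
    (A * vecMulVec v (star v)).trace = star v ⬝ᵥ (A *ᵥ v) := by
  simp only [Matrix.trace, Matrix.diag, Matrix.mul_apply, vecMulVec_apply, dotProduct, mulVec,
    Pi.star_apply, Finset.mul_sum]
  refine Finset.sum_congr rfl fun s _ => Finset.sum_congr rfl fun t _ => by ring

omit [DecidableEq n] in
lemma psd_vecMulVec (v : n → ℂ) : (vecMulVec v (star v)).PosSemidef := by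
  rw [posSemidef_iff_dotProduct_mulVec]
  constructor
  · ext s t
    simp [conjTranspose_apply, vecMulVec_apply, mul_comm]
  · intro x
    have : star x ⬝ᵥ (vecMulVec v (star v) *ᵥ x) = star (star v ⬝ᵥ x) * (star v ⬝ᵥ x) := by
      simp only [mulVec, dotProduct, vecMulVec_apply, Pi.star_apply, Finset.mul_sum,
        Finset.sum_mul, star_sum, star_mul']
      rw [Finset.sum_comm]
      refine Finset.sum_congr rfl fun s _ => Finset.sum_congr rfl fun t _ => by
        simp; ring
    rw [this]
    exact star_mul_self_nonneg _

omit [DecidableEq n] in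
lemma herm_dot_im {A : Matrix n n ℂ} (hA : A.IsHermitian) (x : n → ℂ) :
    (star x ⬝ᵥ (A *ᵥ x)).im = 0 := by
  have h : star (star x ⬝ᵥ (A *ᵥ x)) = star x ⬝ᵥ (A *ᵥ x) := by
    rw [← star_dotProduct_star, star_star, star_mulVec, hA.eq, ← dotProduct_mulVec]
  have := congrArg Complex.im h
  simp at this
  linarith

lemma psd_trace_nonneg {A : Matrix n n ℂ} (hA : A.PosSemidef) : 0 ≤ A.trace := by
  have h : ∀ i, 0 ≤ A i i := by
    intro i
    have := hA.dotProduct_mulVec_nonneg (Pi.single i 1)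
    simpa [mulVec_single, dotProduct, Pi.single_apply, Finset.sum_ite_eq'] using this
  exact Finset.sum_nonneg fun i _ => h i

open scoped MatrixOrder in
lemma psd_trace_mul_nonneg {A B : Matrix n n ℂ} (hA : A.PosSemidef) (hB : B.PosSemidef) :
    0 ≤ (A * B).trace := by
  obtain ⟨C, hC⟩ := CStarAlgebra.nonneg_iff_eq_star_mul_self.mp hB.nonneg
  subst hC
  rw [← Matrix.mul_assoc, trace_mul_cycle]
  exact psd_trace_nonneg (hA.mul_mul_conjTranspose_same C)

lemma trace_eq_sum_eig {A : Matrix n n ℂ} (hA : A.IsHermitian) :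
    A.trace = ∑ i, (hA.eigenvalues i : ℂ) := by
  have hu : (star (IsHermitian.eigenvectorUnitary hA : Matrix n n ℂ)) *
      (IsHermitian.eigenvectorUnitary hA : Matrix n n ℂ) = 1 :=
    (Matrix.mem_unitaryGroup_iff').mp (IsHermitian.eigenvectorUnitary hA).2
  conv_lhs => rw [hA.spectral_theorem, Unitary.conjStarAlgAut_apply]
  rw [trace_mul_cycle, hu, Matrix.one_mul, trace_diagonal]
  rfl

lemma trace_sq_eq_sum_eig {A : Matrix n n ℂ} (hA : A.IsHermitian) :
    (A * A).trace = ∑ i, ((hA.eigenvalues i : ℂ))^2 := by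
  set V : Matrix n n ℂ := (IsHermitian.eigenvectorUnitary hA : Matrix n n ℂ) with hV
  set D : Matrix n n ℂ := diagonal (RCLike.ofReal ∘ hA.eigenvalues) with hD
  have hu : star V * V = 1 := (Matrix.mem_unitaryGroup_iff').mp (IsHermitian.eigenvectorUnitary hA).2
  have key : (V * D * star V) * (V * D * star V) = V * (D * D) * star V := by
    simp only [Matrix.mul_assoc]
    rw [← Matrix.mul_assoc (star V) V, hu, Matrix.one_mul]
  conv_lhs => rw [hA.spectral_theorem, Unitary.conjStarAlgAut_apply]
  rw [← hV, ← hD, key, trace_mul_cycle, hu, Matrix.one_mul,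
    diagonal_mul_diagonal, trace_diagonal]
  simp [sq]

lemma psd_trace_sq_le {A : Matrix n n ℂ} (hA : A.PosSemidef) :
    ((A * A).trace).re ≤ (A.trace.re)^2 := by
  have e1 : A.trace.re = ∑ i, hA.1.eigenvalues i := by
    rw [trace_eq_sum_eig hA.1]; simp
  have e2 : ((A * A).trace).re = ∑ i, (hA.1.eigenvalues i)^2 := by
    rw [trace_sq_eq_sum_eig hA.1]; simp [← Complex.ofReal_pow]
  rw [e1, e2]
  exact Finset.sum_sq_le_sq_sum_of_nonneg fun i _ => hA.eigenvalues_nonneg i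

omit [DecidableEq n] in
lemma herm_trace_mul_self {A : Matrix n n ℂ} (hA : A.IsHermitian) :
    (A * A).trace = ((∑ s, ∑ t, Complex.normSq (A s t) : ℝ) : ℂ) := by
  have hc : ∀ s t, A t s = (starRingEnd ℂ) (A s t) := by
    intro s t
    conv_lhs => rw [← hA.eq]
    simp [conjTranspose_apply]
  push_cast
  simp only [Matrix.trace, Matrix.diag, Matrix.mul_apply]
  refine Finset.sum_congr rfl fun s _ => Finset.sum_congr rfl fun t _ => ?_
  rw [hc s t, Complex.mul_conj]

end Helpers

theorem stmt_6 (N m : ℕ) (hN : 1 ≤ N) (hm : 1 ≤ m)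
    (M₀ : Matrix (Fin N) (Fin N) ℂ) (M : Fin m → Matrix (Fin N) (Fin N) ℂ)
    (hM₀ : M₀.IsHermitian) (hM : ∀ j, (M j).IsHermitian)
    (v : Fin N → ℂ) (hv : v ≠ 0)
    (σ : Fin m → ℝ) (hσ : ∀ j, 0 < σ j)
    (η : Fin m → ℝ)
    (μhat : Fin m → ℝ) (lam : ℝ) (hlam : 0 < lam)
    (hPSD : (M₀ + ∑ j, (μhat j : ℂ) • M j).PosSemidef)
    (hHv : (M₀ + ∑ j, (μhat j : ℂ) • M j) *ᵥ v = 0)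
    (hgap : ∀ x : Fin N → ℂ, star v ⬝ᵥ x = 0 →
      lam * ∑ i, Complex.normSq (x i) ≤
        (star x ⬝ᵥ ((M₀ + ∑ j, (μhat j : ℂ) • M j) *ᵥ x)).re)
    (ρ : ℝ) (hρ : 0 < ρ) (hρge : ∀ j, σ j * |μhat j| ≤ ρ)
    (X : Matrix (Fin N) (Fin N) ℂ) (hX : X.PosSemidef)
    (hmin : ∀ Y : Matrix (Fin N) (Fin N) ℂ, Y.PosSemidef →
      (M₀ * X).trace.re + ρ * ∑ j, (σ j)⁻¹ *
          ‖(M j * X).trace - (star v ⬝ᵥ (M j *ᵥ v) + (η j : ℂ))‖ ≤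
      (M₀ * Y).trace.re + ρ * ∑ j, (σ j)⁻¹ *
          ‖(M j * Y).trace - (star v ⬝ᵥ (M j *ᵥ v) + (η j : ℂ))‖) :
    0 ≤ (star v ⬝ᵥ (X *ᵥ v)).re / (∑ i, Complex.normSq (v i)) ^ 2 ∧
    ∑ s, ∑ t, Complex.normSq
        ((X - (((star v ⬝ᵥ (X *ᵥ v)).re / (∑ i, Complex.normSq (v i)) ^ 2 : ℝ) : ℂ) •
          vecMulVec v (star v)) s t) ≤
      (4 * ρ / lam) * (∑ j, (σ j)⁻¹ * |η j|) * X.trace.re := by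
  set H := M₀ + ∑ j, (μhat j : ℂ) • M j with hHdef
  set W := vecMulVec v (star v) with hWdef
  have hHherm : H.IsHermitian := hPSD.1
  have hWps : W.PosSemidef := psd_vecMulVec v
  have hWherm : W.IsHermitian := hWps.1
  set n2 := ∑ i, Complex.normSq (v i) with hn2def
  have hn2 : 0 < n2 := by
    obtain ⟨i, hi⟩ := Function.ne_iff.mp hv
    exact Finset.sum_pos' (fun i _ => Complex.normSq_nonneg _)
      ⟨i, Finset.mem_univ i, by simpa [Complex.normSq_pos] using hi⟩
  have hvv : star v ⬝ᵥ v = (n2 : ℂ) := by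
    rw [hn2def]
    push_cast
    refine Finset.sum_congr rfl fun i _ => ?_
    rw [Pi.star_apply, mul_comm, Complex.star_def, Complex.mul_conj]
  set a := (star v ⬝ᵥ (X *ᵥ v)).re with hadef
  have ha : 0 ≤ a := hX.re_dotProduct_nonneg v
  set β := a / n2 ^ 2 with hβdef
  refine ⟨by positivity, ?_⟩
  -- basic matrix identities
  have hexp : ∀ B : Matrix (Fin N) (Fin N) ℂ,
      (H * B).trace = (M₀ * B).trace + ∑ j, (μhat j : ℂ) * (M j * B).trace := by
    intro B
    rw [hHdef, Matrix.add_mul, trace_add, Finset.sum_mul, trace_sum]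
    congr 1
    refine Finset.sum_congr rfl fun j _ => ?_
    rw [Matrix.smul_mul, trace_smul, smul_eq_mul]
  have hHW : H * W = 0 := by
    ext s t
    have h0 : ∑ u, H s u * v u = 0 := by
      have := congrFun hHv s
      simpa [mulVec, dotProduct] using this
    simp only [hWdef, Matrix.mul_apply, vecMulVec_apply, Pi.star_apply, Matrix.zero_apply]
    calc ∑ u, H s u * (v u * star (v t)) = (∑ u, H s u * v u) * star (v t) := by
          rw [Finset.sum_mul]
          exact Finset.sum_congr rfl fun u _ => by ring
    _ = 0 := by rw [h0, zero_mul]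
  have hWH : W * H = 0 := by
    have h1 : W * H = (H * W)ᴴ := by rw [conjTranspose_mul, hWherm.eq, hHherm.eq]
    rw [h1, hHW, conjTranspose_zero]
  have hvH : star v ᵥ* H = 0 := by
    have h1 := star_mulVec H v
    rw [hHv, star_zero, hHherm.eq] at h1
    exact h1.symm
  have hWW : W * W = (n2 : ℂ) • W := by
    ext s t
    simp only [hWdef, Matrix.mul_apply, vecMulVec_apply, Pi.star_apply, Matrix.smul_apply,
      smul_eq_mul]
    calc ∑ u, v s * star (v u) * (v u * star (v t))
        = (∑ u, star (v u) * v u) * (v s * star (v t)) := by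
          rw [Finset.sum_mul]
          exact Finset.sum_congr rfl fun u _ => by ring
    _ = (n2 : ℂ) * (v s * star (v t)) := by rw [← hvv]; rfl
  have hWtr : W.trace = (n2 : ℂ) := by
    have : (1 * W).trace = star v ⬝ᵥ ((1 : Matrix (Fin N) (Fin N) ℂ) *ᵥ v) :=
      trace_mul_vecMulVec 1 v
    rwa [Matrix.one_mul, Matrix.one_mulVec, hvv] at this
  -- the projection P
  set c : ℂ := ((n2⁻¹ : ℝ) : ℂ) with hcdef
  have hcn2 : c * (n2 : ℂ) = 1 := by
    rw [hcdef, ← Complex.ofReal_mul, inv_mul_cancel₀ hn2.ne']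
    simp
  set P := (1 : Matrix (Fin N) (Fin N) ℂ) - c • W with hPdef
  have hPherm : P.IsHermitian := by
    show Pᴴ = P
    rw [hPdef, conjTranspose_sub, conjTranspose_smul, conjTranspose_one, hWherm.eq, hcdef,
      Complex.star_def, Complex.conj_ofReal]
  have hPP : P * P = P := by
    have hcc : c * c * (n2 : ℂ) = c := by rw [mul_assoc, hcn2, mul_one]
    rw [hPdef]
    simp only [Matrix.sub_mul, Matrix.mul_sub, Matrix.smul_mul, Matrix.mul_smul, Matrix.one_mul,
      Matrix.mul_one, hWW, smul_smul]
    rw [hcn2, one_smul, sub_self, smul_zero, sub_zero]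
  have hHP : H * P = H := by
    rw [hPdef, Matrix.mul_sub, Matrix.mul_one, Matrix.mul_smul, hHW, smul_zero, sub_zero]
  have hPH : P * H = H := by
    rw [hPdef, Matrix.sub_mul, Matrix.one_mul, Matrix.smul_mul, hWH, smul_zero, sub_zero]
  have hPps : P.PosSemidef := by
    have h1 : P = Pᴴ * P := by rw [hPherm.eq, hPP]
    rw [h1]
    exact posSemidef_conjTranspose_mul_self P
  have hPXP : (P * X * P).PosSemidef := by
    have := hX.conjTranspose_mul_mul_same P
    rwa [hPherm.eq] at this
  have hWmv : ∀ x : Fin N → ℂ, W *ᵥ x = (star v ⬝ᵥ x) • v := by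
    intro x
    ext s
    simp only [hWdef, mulVec, dotProduct, vecMulVec_apply, Pi.star_apply, Pi.smul_apply,
      smul_eq_mul, Finset.sum_mul, Finset.mul_sum]
    exact Finset.sum_congr rfl fun u _ => by ring
  have hPmv : ∀ x : Fin N → ℂ, P *ᵥ x = x - (c * (star v ⬝ᵥ x)) • v := by
    intro x
    rw [hPdef, Matrix.sub_mulVec, Matrix.one_mulVec, smul_mulVec, hWmv, smul_smul]
  have hvP : ∀ x : Fin N → ℂ, star v ⬝ᵥ (P *ᵥ x) = 0 := by
    intro x
    rw [hPmv, dotProduct_sub, dotProduct_smul, hvv, smul_eq_mul, mul_comm c _, mul_assoc,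
      hcn2, mul_one, sub_self]
  -- H - lam • P is PSD
  have hgapPSD : (H - (lam : ℂ) • P).PosSemidef := by
    rw [posSemidef_iff_dotProduct_mulVec]
    constructor
    · show _ᴴ = _
      rw [conjTranspose_sub, conjTranspose_smul, hHherm.eq, hPherm.eq, Complex.star_def,
        Complex.conj_ofReal]
    · intro x
      set w := P *ᵥ x with hwdef
      have hw0 : star v ⬝ᵥ w = 0 := hvP x
      have hHwx : H *ᵥ w = H *ᵥ x := by
        rw [hwdef, hPmv x, Matrix.mulVec_sub, Matrix.mulVec_smul, hHv, smul_zero, sub_zero]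
      have hdx : star x ⬝ᵥ (H *ᵥ x) = star w ⬝ᵥ (H *ᵥ w) := by
        rw [hHwx]
        have h1 : star v ⬝ᵥ (H *ᵥ x) = 0 := by rw [dotProduct_mulVec, hvH, zero_dotProduct]
        rw [hwdef, hPmv x, star_sub, sub_dotProduct, star_smul, smul_dotProduct, h1, smul_zero,
          sub_zero]
      have hxP : star x ⬝ᵥ (P *ᵥ x) = ((∑ i, Complex.normSq (w i) : ℝ) : ℂ) := by
        have hsxP : star x ᵥ* P = star w := by
          rw [hwdef, star_mulVec, hPherm.eq]
        calc star x ⬝ᵥ (P *ᵥ x) = star x ⬝ᵥ ((P * P) *ᵥ x) := by rw [hPP]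
        _ = star x ⬝ᵥ (P *ᵥ (P *ᵥ x)) := by rw [← mulVec_mulVec]
        _ = (star x ᵥ* P) ⬝ᵥ (P *ᵥ x) := dotProduct_mulVec _ _ _
        _ = star w ⬝ᵥ w := by rw [hsxP, ← hwdef]
        _ = ((∑ i, Complex.normSq (w i) : ℝ) : ℂ) := by
            push_cast
            refine Finset.sum_congr rfl fun i _ => ?_
            rw [Pi.star_apply, mul_comm, Complex.star_def, Complex.mul_conj]
      have him := herm_dot_im hHherm w
      have hre := hgap w hw0
      rw [Matrix.sub_mulVec, dotProduct_sub, hdx, smul_mulVec, dotProduct_smul, hxP,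
        smul_eq_mul]
      rw [Complex.le_def]
      constructor
      · simp only [Complex.zero_re, Complex.sub_re, Complex.mul_re, Complex.ofReal_re,
          Complex.ofReal_im, zero_mul, sub_zero]
        linarith
      · simp [him]
  -- trace inequalities
  set T := ((H * X).trace).re with hTdef
  set t := X.trace.re with htdef
  have hPXtr : (P * X).trace = X.trace - c * (star v ⬝ᵥ (X *ᵥ v)) := by
    rw [hPdef, Matrix.sub_mul, Matrix.one_mul, trace_sub, Matrix.smul_mul, trace_smul,
      smul_eq_mul, trace_mul_comm W X, hWdef, trace_mul_vecMulVec]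
  have hPXre : ((P * X).trace).re = t - n2⁻¹ * a := by
    rw [hPXtr]
    simp [hcdef, Complex.sub_re, Complex.mul_re, htdef, hadef]
  have hs0 : 0 ≤ t - n2⁻¹ * a := by
    have h1 := psd_trace_mul_nonneg hPps hX
    have := (Complex.nonneg_iff.mp h1).1
    rwa [hPXre] at this
  have hlams : lam * (t - n2⁻¹ * a) ≤ T := by
    have hk := psd_trace_mul_nonneg hgapPSD hPXP
    have htr1 : ((H - (lam : ℂ) • P) * (P * X * P)).trace
        = (H * X).trace - (lam : ℂ) * (P * X).trace := by
      have e1 : (H * (P * X * P)).trace = (H * X).trace := by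
        calc (H * (P * X * P)).trace = ((H * X) * P).trace := by
              rw [← Matrix.mul_assoc, ← Matrix.mul_assoc, hHP]
        _ = ((P * H) * X).trace := by rw [trace_mul_cycle, Matrix.mul_assoc, ← Matrix.mul_assoc]
        _ = (H * X).trace := by rw [hPH]
      have e2 : (P * (P * X * P)).trace = (P * X).trace := by
        calc (P * (P * X * P)).trace = ((P * X) * P).trace := by
              rw [← Matrix.mul_assoc, ← Matrix.mul_assoc, hPP]
        _ = ((P * P) * X).trace := by rw [trace_mul_cycle, Matrix.mul_assoc, ← Matrix.mul_assoc]
        _ = (P * X).trace := by rw [hPP]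
      rw [Matrix.sub_mul, trace_sub, Matrix.smul_mul, trace_smul, smul_eq_mul, e1, e2]
    rw [htr1] at hk
    have := (Complex.nonneg_iff.mp hk).1
    simp only [Complex.sub_re, Complex.mul_re, Complex.ofReal_re, Complex.ofReal_im,
      zero_mul, sub_zero] at this
    rw [hPXre] at this
    linarith
  -- Step A : T ≤ 2 ρ ε
  set ε := ∑ j, (σ j)⁻¹ * |η j| with hεdef
  have hε : 0 ≤ ε := Finset.sum_nonneg fun j _ =>
    mul_nonneg (inv_nonneg.mpr (hσ j).le) (abs_nonneg _)
  have hμ : ∀ j, |μhat j| ≤ ρ * (σ j)⁻¹ := by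
    intro j
    rw [← div_eq_mul_inv, le_div_iff₀ (hσ j)]
    calc |μhat j| * σ j = σ j * |μhat j| := by ring
    _ ≤ ρ := hρge j
  have hT2ρε : T ≤ 2 * ρ * ε := by
    have hcre : ∀ j, (star v ⬝ᵥ ((M j) *ᵥ v)).im = 0 := fun j => herm_dot_im (hM j) v
    have hb0im : (star v ⬝ᵥ (M₀ *ᵥ v)).im = 0 := herm_dot_im hM₀ v
    set b₀ := (star v ⬝ᵥ (M₀ *ᵥ v)).re with hb₀def
    set cc : Fin m → ℝ := fun j => (star v ⬝ᵥ ((M j) *ᵥ v)).re with hccdef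
    -- relation from H v = 0
    have hrel : b₀ + ∑ j, μhat j * cc j = 0 := by
      have h1 : (M₀ * W).trace + ∑ j, (μhat j : ℂ) * (M j * W).trace = 0 := by
        rw [← hexp W, hHW, trace_zero]
      have h2 := congrArg Complex.re h1
      simp only [Complex.add_re, Complex.re_sum, Complex.zero_re, Complex.mul_re,
        Complex.ofReal_re, Complex.ofReal_im, zero_mul, sub_zero] at h2
      have h3 : ∀ j, ((M j * W).trace).re = cc j := by
        intro j
        rw [hWdef, trace_mul_vecMulVec]
      have h4 : ((M₀ * W).trace).re = b₀ := by
        rw [hWdef, trace_mul_vecMulVec]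
      simp only [h3, h4] at h2
      exact h2
    -- optimality at W
    have habs : ∀ j, ‖(M j * W).trace - (star v ⬝ᵥ ((M j) *ᵥ v) + (η j : ℂ))‖
        = |η j| := by
      intro j
      have h1 : (M j * W).trace - (star v ⬝ᵥ ((M j) *ᵥ v) + (η j : ℂ)) = -(η j : ℂ) := by
        rw [hWdef, trace_mul_vecMulVec]
        ring
      rw [h1, norm_neg, Complex.norm_real, Real.norm_eq_abs]
    have hminW := hmin W hWps
    rw [hWdef, trace_mul_vecMulVec] at hminW
    have hminW' : (M₀ * X).trace.re + ρ * ∑ j, (σ j)⁻¹ *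
        ‖(M j * X).trace - (star v ⬝ᵥ ((M j) *ᵥ v) + (η j : ℂ))‖
        ≤ b₀ + ρ * ε := by
      calc (M₀ * X).trace.re + ρ * ∑ j, (σ j)⁻¹ *
          ‖(M j * X).trace - (star v ⬝ᵥ ((M j) *ᵥ v) + (η j : ℂ))‖
          ≤ b₀ + ρ * ∑ j, (σ j)⁻¹ *
            ‖(M j * W).trace - (star v ⬝ᵥ ((M j) *ᵥ v) + (η j : ℂ))‖ := hminW
      _ = b₀ + ρ * ε := by
          congr 1
          rw [hεdef]
          congr 1
          exact Finset.sum_congr rfl fun j _ => by rw [habs j]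
    -- expansion of T
    have hTexp : T = (M₀ * X).trace.re + ∑ j, μhat j * ((M j * X).trace).re := by
      rw [hTdef, hexp X, Complex.add_re, Complex.re_sum]
      congr 1
      refine Finset.sum_congr rfl fun j _ => ?_
      simp [Complex.mul_re]
    -- termwise bound
    have hterm : ∀ j, μhat j * ((M j * X).trace).re ≤ ρ * ((σ j)⁻¹ *
        ‖(M j * X).trace - (star v ⬝ᵥ ((M j) *ᵥ v) + (η j : ℂ))‖)
        + μhat j * cc j + μhat j * η j := by
      intro j
      set d : ℂ := (M j * X).trace - (star v ⬝ᵥ ((M j) *ᵥ v) + (η j : ℂ)) with hddef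
      have hdre : d.re = ((M j * X).trace).re - (cc j + η j) := by
        rw [hddef]
        simp [hccdef]
      have h1 : μhat j * d.re ≤ ρ * ((σ j)⁻¹ * ‖d‖) := by
        calc μhat j * d.re ≤ |μhat j * d.re| := le_abs_self _
        _ = |μhat j| * |d.re| := abs_mul _ _
        _ ≤ (ρ * (σ j)⁻¹) * ‖d‖ := by
            exact mul_le_mul (hμ j) (Complex.abs_re_le_norm d) (abs_nonneg _)
              (mul_nonneg hρ.le (inv_nonneg.mpr (hσ j).le))
        _ = ρ * ((σ j)⁻¹ * ‖d‖) := by ring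
      have h2 : μhat j * ((M j * X).trace).re
          = μhat j * d.re + μhat j * cc j + μhat j * η j := by
        rw [hdre]; ring
      linarith
    have hsum : ∑ j, μhat j * ((M j * X).trace).re ≤ ρ * (∑ j, (σ j)⁻¹ *
        ‖(M j * X).trace - (star v ⬝ᵥ ((M j) *ᵥ v) + (η j : ℂ))‖)
        + ∑ j, μhat j * cc j + ∑ j, μhat j * η j := by
      rw [Finset.mul_sum, ← Finset.sum_add_distrib, ← Finset.sum_add_distrib]
      exact Finset.sum_le_sum fun j _ => hterm j
    have hμη : ∑ j, μhat j * η j ≤ ρ * ε := by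
      rw [hεdef, Finset.mul_sum]
      refine Finset.sum_le_sum fun j _ => ?_
      calc μhat j * η j ≤ |μhat j * η j| := le_abs_self _
      _ = |μhat j| * |η j| := abs_mul _ _
      _ ≤ (ρ * (σ j)⁻¹) * |η j| := mul_le_mul_of_nonneg_right (hμ j) (abs_nonneg _)
      _ = ρ * ((σ j)⁻¹ * |η j|) := by ring
    linarith
  -- geometry
  set Δ := X - (β : ℂ) • W with hΔdef
  have hΔherm : Δ.IsHermitian := by
    show Δᴴ = Δ
    rw [hΔdef, conjTranspose_sub, conjTranspose_smul, hX.1.eq, hWherm.eq, Complex.star_def,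
      Complex.conj_ofReal]
  have hLHS : ((∑ s, ∑ t, Complex.normSq (Δ s t) : ℝ) : ℂ) = (Δ * Δ).trace :=
    (herm_trace_mul_self hΔherm).symm
  have hXWtr : (X * W).trace = star v ⬝ᵥ (X *ᵥ v) := by rw [hWdef, trace_mul_vecMulVec]
  have hXWre : ((X * W).trace).re = a := by rw [hXWtr]
  have hXWim : ((X * W).trace).im = 0 := by rw [hXWtr]; exact herm_dot_im hX.1 v
  have hΔexp : Δ * Δ = X * X - (β : ℂ) • (X * W) - (β : ℂ) • (W * X)
      + ((β : ℂ) * (β : ℂ)) • (W * W) := by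
    rw [hΔdef]
    simp only [Matrix.sub_mul, Matrix.mul_sub, Matrix.smul_mul, Matrix.mul_smul, smul_smul]
    module
  have hΔtr : ((Δ * Δ).trace).re = ((X * X).trace).re - 2 * β * a + β * β * (n2 * n2) := by
    rw [hΔexp, trace_add, trace_sub, trace_sub, trace_smul, trace_smul, trace_smul,
      hWW, trace_smul, hWtr, trace_mul_comm W X]
    simp only [smul_eq_mul, Complex.add_re, Complex.sub_re, Complex.mul_re, Complex.ofReal_re,
      Complex.ofReal_im, zero_mul, sub_zero, hXWre, hXWim, mul_zero, ← Complex.ofReal_mul]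
    ring
  have hgoal : (∑ s, ∑ t, Complex.normSq (Δ s t)) = ((Δ * Δ).trace).re := by
    rw [← hLHS, Complex.ofReal_re]
  rw [hgoal, hΔtr]
  set au := n2⁻¹ * a with haudef
  have htrXX := psd_trace_sq_le hX
  have hau0 : 0 ≤ au := mul_nonneg (inv_nonneg.mpr hn2.le) ha
  have haut : au ≤ t := by linarith
  have ht0 : 0 ≤ t := le_trans hau0 haut
  have h1 : ((X * X).trace).re - 2 * β * a + β * β * (n2 * n2)
      = ((X * X).trace).re - au * au := by
    rw [hβdef, haudef]
    have hne : n2 ≠ 0 := hn2.ne'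
    field_simp
    ring
  rw [h1, show 4 * ρ / lam * ε * t = 4 * ρ * ε * t / lam by ring, le_div_iff₀ hlam]
  have h2 : lam * (t - au) * (t + au) ≤ T * (t + au) :=
    mul_le_mul_of_nonneg_right hlams (by linarith)
  have h3 : T * (t + au) ≤ (2 * ρ * ε) * (t + au) :=
    mul_le_mul_of_nonneg_right hT2ρε (by linarith)
  have h4 : (2 * ρ * ε) * (t + au) ≤ (2 * ρ * ε) * (2 * t) :=
    mul_le_mul_of_nonneg_left (by linarith) (by positivity)
  have h5 : (((X * X).trace).re - au * au) * lam ≤ (t ^ 2 - au * au) * lam :=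
    mul_le_mul_of_nonneg_right (by linarith) hlam.le
  have h6 : (t ^ 2 - au * au) * lam = lam * (t - au) * (t + au) := by ring
  linarith
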